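/- Let X = (x₀, x₁, x₂) ∈ ℝ³ with 0 < x₀ < x₁ < x₂ and x₀, x₁, x₂ linearly independent over ℚ, consider any run of the Smallest Vector Algorithm started at X, fix s, and let H'⁽ˢ⁾ be the convex hull of {g₀'⁽ˢ⁾, g₁'⁽ˢ⁾, g₂'⁽ˢ⁾, −g₀'⁽ˢ⁾, −g₁'⁽ˢ⁾, −g₂'⁽ˢ⁾} in P. Then for every integer vector h ∈ ℤ³ whose projection h' lies in H'⁽ˢ⁾: (i) if h ≠ 0 then ‖h''‖ ≥ ‖g₀''⁽ˢ⁾‖; (ii) if h is not an integer multiple of g₀⁽ˢ⁾ then ‖h''‖ ≥ ‖g₁''⁽ˢ⁾‖; (iii) if h is not of the form n₀·g₀⁽ˢ⁾ + n₁·g₁⁽ˢ⁾ with n₀, n₁ ∈ ℤ then ‖h''‖ ≥ ‖g₂''⁽ˢ⁾‖. Consequently, if h₀, h₁, h₂ ∈ ℤ³ are linearly independent and each hᵢ' lies in H'⁽ˢ⁾, then max_{i=0,1,2} ‖hᵢ''‖ ≥ ‖g₂''⁽ˢ⁾‖. -/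

import Mathlib

open Filter InnerProductGeometry Polynomial

noncomputable section

abbrev E3 := EuclideanSpace ℝ (Fin 3)

/-- Identify a plain function `Fin 3 → ℝ` with a point of Euclidean 3-space. -/
def toE3 (v : Fin 3 → ℝ) : E3 := (WithLp.equiv 2 (Fin 3 → ℝ)).symm v

/-- The point of Euclidean 3-space attached to an integer vector. -/
def toR3 (v : Fin 3 → ℤ) : E3 := toE3 fun i => (v i : ℝ)

/-- Orthogonal projection of `h` onto the line `ℝ·X` (written `h''`). -/
def projL (X h : E3) : E3 := ((inner ℝ h X : ℝ) / ‖X‖ ^ 2) • X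

/-- Orthogonal projection of `h` onto the plane `X^⊥` (written `h'`). -/
def projPl (X h : E3) : E3 := h - projL X h

/-- `gᵢ'` : projection of the `i`-th column onto the plane `X^⊥`. -/
def colP (X : E3) (g : Fin 3 → Fin 3 → ℤ) (i : Fin 3) : E3 := projPl X (toR3 (g i))

/-- `gᵢ''` : projection of the `i`-th column onto the line `ℝ·X`. -/
def colL (X : E3) (g : Fin 3 → Fin 3 → ℤ) (i : Fin 3) : E3 := projL X (toR3 (g i))

def max3 (f : Fin 3 → ℝ) : ℝ := max (f 0) (max (f 1) (f 2))

def min3 (f : Fin 3 → ℝ) : ℝ := min (f 0) (min (f 1) (f 2))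

/-- One step of the Smallest Vector Algorithm: from the columns `g` to the columns `g'`. -/
def SVAStep (X : E3) (g g' : Fin 3 → Fin 3 → ℤ) : Prop :=
  ∃ f : Fin 3 → Fin 3 → ℤ,
    ((min3 ![‖colP X g 1 - colP X g 0‖, ‖colP X g 2 - colP X g 1‖, ‖colP X g 2 - colP X g 0‖]
        = ‖colP X g 1 - colP X g 0‖ ∧ f = ![g 0, g 1 - g 0, g 2]) ∨
     (min3 ![‖colP X g 1 - colP X g 0‖, ‖colP X g 2 - colP X g 1‖, ‖colP X g 2 - colP X g 0‖]
        = ‖colP X g 2 - colP X g 1‖ ∧ f = ![g 0, g 1, g 2 - g 1]) ∨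
     (min3 ![‖colP X g 1 - colP X g 0‖, ‖colP X g 2 - colP X g 1‖, ‖colP X g 2 - colP X g 0‖]
        = ‖colP X g 2 - colP X g 0‖ ∧ f = ![g 0, g 1, g 2 - g 0])) ∧
    ∃ σ : Equiv.Perm (Fin 3), (∀ i, g' i = f (σ i)) ∧
      ‖colL X g' 0‖ ≤ ‖colL X g' 1‖ ∧ ‖colL X g' 1‖ ≤ ‖colL X g' 2‖

/-- A run of the Smallest Vector Algorithm started at `X`: `g s i` is the `i`-th column of `G⁽ˢ⁾`. -/
def IsSVARun (X : E3) (g : ℕ → Fin 3 → Fin 3 → ℤ) : Prop :=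
  (∀ i j, g 0 i j = if i = j then 1 else 0) ∧ ∀ s, SVAStep X (g s) (g (s + 1))

/-- The cofactor vector `X⁽ˢ⁾ = ᵀG⁽ˢ⁾·X`. -/
def cofVec (X : E3) (g : Fin 3 → Fin 3 → ℤ) (i : Fin 3) : ℝ := (inner ℝ (toR3 (g i)) X : ℝ)

/-- The hexagon `H'⁽ˢ⁾`: convex hull of `±g₀', ±g₁', ±g₂'` in the plane `X^⊥`. -/
def hexHull (Y : E3) (g : Fin 3 → Fin 3 → ℤ) : Set E3 :=
  convexHull ℝ {colP Y g 0, colP Y g 1, colP Y g 2, -colP Y g 0, -colP Y g 1, -colP Y g 2}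

/-!
Each step of the algorithm replaces a column `gⱼ` by `gⱼ - gᵢ` where `⟨gᵢ, X⟩ ≤ ⟨gⱼ, X⟩`. Hence
the columns stay a `ℤ`-basis of `ℤ³` with `⟨gᵢ, X⟩ ≥ 0` in which `X` has positive coordinates
`aᵢ`. If `h'` lies in the hexagon then `h' = ∑ cᵢ gᵢ'` with `∑ |cᵢ| ≤ 1`, so the integer
coordinates of `h = ∑ nᵢ gᵢ` satisfy `∑ |nᵢ - t aᵢ| ≤ 1` for some real `t`. This forces all
nonzero `nᵢ` to have the same sign, so `|⟨h, X⟩| = ∑ |nᵢ| ⟨gᵢ, X⟩ ≥ ⟨gₖ, X⟩` whenever `nₖ ≠ 0`.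
As `‖h''‖ = |⟨h, X⟩| / ‖X‖` and the `⟨gᵢ, X⟩` are sorted, this gives the three bounds.
-/

open Set
open scoped RealInnerProductSpace

section Finite

variable {ι : Type*} [Fintype ι]

theorem convexOn_sum_abs : ConvexOn ℝ univ fun c : ι → ℝ => ∑ i, |c i| := by
  refine ⟨convex_univ, fun x _ y _ a b ha hb _ => ?_⟩
  simp only [Pi.add_apply, Pi.smul_apply, smul_eq_mul, Finset.mul_sum, ← Finset.sum_add_distrib]
  gcongr with i
  calc |a * x i + b * y i| ≤ |a * x i| + |b * y i| := abs_add_le _ _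
    _ = a * |x i| + b * |y i| := by rw [abs_mul, abs_mul, abs_of_nonneg ha, abs_of_nonneg hb]

theorem exists_sum_abs_le_one_of_mem_convexHull {E : Type*} [AddCommGroup E] [Module ℝ E]
    [DecidableEq ι] {v : ι → E} {z : E} (hz : z ∈ convexHull ℝ (range v ∪ range (-v))) :
    ∃ c : ι → ℝ, ∑ i, |c i| ≤ 1 ∧ ∑ i, c i • v i = z := by
  set L := Fintype.linearCombination ℝ v
  have hL : L '' (range (Pi.single · 1) ∪ range (-Pi.single · 1)) = range v ∪ range (-v) := by
    simp only [image_union, ← range_comp]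
    congr 2 <;> ext i <;> simp [L, Fintype.linearCombination_apply_single]
  rw [← hL, ← L.image_convexHull] at hz
  obtain ⟨c, hc, rfl⟩ := hz
  obtain ⟨y, hy, hcy⟩ := convexOn_sum_abs.exists_ge_of_mem_convexHull (subset_univ _) hc
  refine ⟨c, hcy.trans ?_, (Fintype.linearCombination_apply ℝ v c).symm⟩
  rcases hy with ⟨i, rfl⟩ | ⟨i, rfl⟩ <;> simp [Pi.single_apply, apply_ite]

theorem mul_nonneg_of_abs_sub_mul_add_abs_sub_mul_le_one {m n : ℤ} {a b t : ℝ} (ha : 0 < a)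
    (hb : 0 < b) (h : |m - t * a| + |n - t * b| ≤ 1) : 0 ≤ m * n := by
  by_contra! hmn
  have hlow : a + b ≤ |b * m - a * n| := by
    rcases mul_neg_iff.mp hmn with ⟨hm, hn⟩ | ⟨hm, hn⟩
    · have hm : (1 : ℝ) ≤ m := by exact_mod_cast hm
      have hn : (n : ℝ) ≤ -1 := by exact_mod_cast (show n ≤ -1 by omega)
      exact le_abs.mpr (Or.inl (by nlinarith))
    · have hm : (m : ℝ) ≤ -1 := by exact_mod_cast (show m ≤ -1 by omega)
      have hn : (1 : ℝ) ≤ n := by exact_mod_cast hn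
      exact le_abs.mpr (Or.inr (by nlinarith))
  have hup : |b * m - a * n| ≤ max a b := calc
    |b * m - a * n| = |b * (m - t * a) - a * (n - t * b)| := by ring_nf
    _ ≤ b * |m - t * a| + a * |n - t * b| := by
      refine (abs_sub _ _).trans ?_
      rw [abs_mul, abs_mul, abs_of_pos ha, abs_of_pos hb]
    _ ≤ max a b * (|m - t * a| + |n - t * b|) := by
      rw [mul_add]
      gcongr
      exacts [le_max_right a b, le_max_left a b]
    _ ≤ max a b := mul_le_of_le_one_right (ha.le.trans (le_max_left a b)) h
  linarith [max_lt (by linarith : a < a + b) (by linarith : b < a + b)]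

theorem mul_nonneg_of_sum_abs_sub_mul_le_one {n : ι → ℤ} {a : ι → ℝ} {t : ℝ}
    (ha : ∀ i, 0 < a i) (h : ∑ i, |(n i : ℝ) - t * a i| ≤ 1) (i j : ι) : 0 ≤ n i * n j := by
  classical
  rcases eq_or_ne i j with rfl | hij
  · exact mul_self_nonneg _
  refine mul_nonneg_of_abs_sub_mul_add_abs_sub_mul_le_one (t := t) (ha i) (ha j) (le_trans ?_ h)
  rw [← Finset.sum_pair (f := fun l => |(n l : ℝ) - t * a l|) hij]
  exact Finset.sum_le_sum_of_subset_of_nonneg (Finset.subset_univ _) fun _ _ _ => abs_nonneg _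

theorem abs_mul_le_abs_sum_mul {n x : ι → ℝ} (hn : ∀ i j, 0 ≤ n i * n j) (hx : ∀ i, 0 ≤ x i)
    (k : ι) : |n k| * x k ≤ |∑ i, n i * x i| := by
  rcases eq_or_ne (n k) 0 with hk | hk
  · simp [hk]
  refine le_of_mul_le_mul_left ?_ (abs_pos.mpr hk)
  calc |n k| * (|n k| * x k) = n k * (n k * x k) := by
        rw [← mul_assoc, ← mul_assoc, abs_mul_abs_self]
    _ ≤ ∑ i, n k * (n i * x i) :=
        Finset.single_le_sum (f := fun i => n k * (n i * x i))
          (fun i _ => by rw [← mul_assoc]; exact mul_nonneg (hn k i) (hx i)) (Finset.mem_univ k)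
    _ = n k * ∑ i, n i * x i := by rw [Finset.mul_sum]
    _ ≤ |n k| * |∑ i, n i * x i| := by rw [← abs_mul]; exact le_abs_self _

theorem le_abs_sum_mul_of_sum_abs_sub_mul_le_one {n : ι → ℤ} {a x : ι → ℝ} {t : ℝ}
    (ha : ∀ i, 0 < a i) (hx : ∀ i, 0 ≤ x i) (h : ∑ i, |(n i : ℝ) - t * a i| ≤ 1) {k : ι}
    (hk : n k ≠ 0) : x k ≤ |∑ i, (n i : ℝ) * x i| :=
  calc x k ≤ |(n k : ℝ)| * x k :=
        le_mul_of_one_le_left (hx k) (by exact_mod_cast Int.one_le_abs hk)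
    _ ≤ |∑ i, (n i : ℝ) * x i| :=
        abs_mul_le_abs_sum_mul (n := fun i => (n i : ℝ))
          (fun i j => by exact_mod_cast mul_nonneg_of_sum_abs_sub_mul_le_one ha h i j) hx k

theorem sum_update_smul_update_sub {R M : Type*} [DecidableEq ι] [Ring R] [AddCommGroup M]
    [Module R M] (a : ι → R) (v : ι → M) {i j : ι} (hij : i ≠ j) :
    ∑ k, Function.update a i (a i + a j) k • Function.update v j (v j - v i) k
      = ∑ k, a k • v k := by
  rw [← sub_eq_zero, ← Finset.sum_sub_distrib]
  have hterm : ∀ k, Function.update a i (a i + a j) k • Function.update v j (v j - v i) k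
      - a k • v k = (Pi.single i (a j • v i) : ι → M) k - (Pi.single j (a j • v i) : ι → M) k := by
    intro k
    rcases eq_or_ne k i with rfl | hki
    · simp [hij, add_smul]
    rcases eq_or_ne k j with rfl | hkj
    · simp [hki, smul_sub]
    · simp [hki, hkj]
  simp [hterm, Finset.sum_sub_distrib]

theorem LinearIndependent.exists_notMem_span_finset {R M : Type*} [Ring R]
    [StrongRankCondition R] [AddCommGroup M] [Module R M] {v : ι → M}
    (hv : LinearIndependent R v) {w : Finset M} (hw : w.card < Fintype.card ι) :
    ∃ i, v i ∉ Submodule.span R (w : Set M) := by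
  by_contra! h
  have := linearIndependent_le_span' v hv w (range_subset_iff.mpr h)
  simp at this
  omega

end Finite

theorem le_max3 (f : Fin 3 → ℝ) (i : Fin 3) : f i ≤ max3 f := by
  fin_cases i <;> simp [max3]

theorem toR3_sum_zsmul {ι : Type*} [Fintype ι] (n : ι → ℤ) (v : ι → Fin 3 → ℤ) :
    toR3 (∑ i, n i • v i) = ∑ i, (n i : ℝ) • toR3 (v i) := by
  ext j; simp [toR3, toE3, Finset.sum_apply]

theorem toR3_sub (u v : Fin 3 → ℤ) : toR3 (u - v) = toR3 u - toR3 v := by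
  ext j; simp [toR3, toE3]

theorem inner_toR3_single (Y : E3) (i : Fin 3) : ⟪toR3 (Pi.single i 1), Y⟫ = Y i := by
  simp [toR3, toE3, PiLp.inner_apply, Pi.single_apply]

theorem projPl_eq_starProjection (Y v : E3) : projPl Y v = (ℝ ∙ Y)ᗮ.starProjection v := by
  rw [Submodule.starProjection_orthogonal_val, Submodule.starProjection_singleton, projPl, projL,
    real_inner_comm]
  rfl

theorem exists_eq_sum_add_smul_of_projPl_eq {ι : Type*} [Fintype ι] {Y v : E3} {c : ι → ℝ}
    {w : ι → E3} (h : projPl Y v = ∑ i, c i • projPl Y (w i)) :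
    ∃ t : ℝ, v = ∑ i, c i • w i + t • Y := by
  simp only [projPl_eq_starProjection, ← map_smul, ← map_sum] at h
  rw [← sub_eq_zero, ← map_sub, Submodule.starProjection_apply_eq_zero_iff,
    Submodule.orthogonal_orthogonal, Submodule.mem_span_singleton] at h
  obtain ⟨t, ht⟩ := h
  exact ⟨t, by rw [ht]; abel⟩

theorem norm_projL (Y v : E3) : ‖projL Y v‖ = |⟪v, Y⟫| / ‖Y‖ := by
  rcases eq_or_ne Y 0 with rfl | hY
  · simp [projL]
  rw [projL, norm_smul, Real.norm_eq_abs, abs_div, abs_of_nonneg (sq_nonneg ‖Y‖)]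
  field_simp [norm_ne_zero_iff.mpr hY]

theorem norm_projL_le_of_abs_inner_le {Y u v : E3} (h : |⟪u, Y⟫| ≤ |⟪v, Y⟫|) :
    ‖projL Y u‖ ≤ ‖projL Y v‖ := by
  rw [norm_projL, norm_projL]
  exact div_le_div_of_nonneg_right h (norm_nonneg Y)

theorem inner_le_inner_of_norm_projL_le {Y u v : E3} (hY : Y ≠ 0) (hu : 0 ≤ ⟪u, Y⟫)
    (hv : 0 ≤ ⟪v, Y⟫) (h : ‖projL Y u‖ ≤ ‖projL Y v‖) : ⟪u, Y⟫ ≤ ⟪v, Y⟫ := by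
  rwa [norm_projL, norm_projL, abs_of_nonneg hu, abs_of_nonneg hv,
    div_le_div_iff_of_pos_right (norm_pos_iff.mpr hY)] at h

structure IsAdaptedBasis (Y : E3) (G : Fin 3 → Fin 3 → ℤ) : Prop where
  span_eq_top : Submodule.span ℤ (range G) = ⊤
  exists_pos_coord : ∃ a : Fin 3 → ℝ, (∀ i, 0 < a i) ∧ ∑ i, a i • toR3 (G i) = Y
  inner_nonneg : ∀ i, 0 ≤ ⟪toR3 (G i), Y⟫

namespace IsAdaptedBasis

variable {Y : E3} {G : Fin 3 → Fin 3 → ℤ}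

theorem pi_single (hY : ∀ i, 0 < Y i) : IsAdaptedBasis Y fun i => Pi.single i 1 where
  span_eq_top := funext (Pi.basisFun_apply ℤ (Fin 3)) ▸ (Pi.basisFun ℤ (Fin 3)).span_eq
  exists_pos_coord := ⟨Y, hY, by ext j; simp [toR3, toE3, Pi.single_apply]⟩
  inner_nonneg i := by rw [inner_toR3_single]; exact (hY i).le

theorem comp_perm (hG : IsAdaptedBasis Y G) (σ : Equiv.Perm (Fin 3)) :
    IsAdaptedBasis Y (G ∘ σ) where
  span_eq_top := by rw [EquivLike.range_comp]; exact hG.span_eq_top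
  exists_pos_coord := by
    obtain ⟨a, ha, haY⟩ := hG.exists_pos_coord
    refine ⟨a ∘ σ, fun i => ha (σ i), ?_⟩
    rw [← haY]
    exact Equiv.sum_comp σ fun i => a i • toR3 (G i)
  inner_nonneg i := hG.inner_nonneg (σ i)

theorem update_sub (hG : IsAdaptedBasis Y G) {i j : Fin 3} (hij : i ≠ j)
    (hle : ⟪toR3 (G i), Y⟫ ≤ ⟪toR3 (G j), Y⟫) :
    IsAdaptedBasis Y (Function.update G j (G j - G i)) where
  span_eq_top := by
    refine eq_top_iff.mpr <|
      hG.span_eq_top ▸ Submodule.span_le.mpr (range_subset_iff.mpr fun k => ?_)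
    have hmem : ∀ l, Function.update G j (G j - G i) l ∈
        Submodule.span ℤ (range (Function.update G j (G j - G i))) :=
      fun l => Submodule.subset_span (mem_range_self l)
    rcases eq_or_ne k j with rfl | hkj
    · simpa [hij] using add_mem (hmem k) (hmem i)
    · simpa [hkj] using hmem k
  exists_pos_coord := by
    obtain ⟨a, ha, haY⟩ := hG.exists_pos_coord
    refine ⟨Function.update a i (a i + a j), fun k => ?_, ?_⟩
    · rcases eq_or_ne k i with rfl | hki
      · simpa using add_pos (ha k) (ha j)
      · simpa [hki] using ha k
    · rw [← haY, ← sum_update_smul_update_sub a (fun k => toR3 (G k)) hij]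
      congr! 2 with k
      rcases eq_or_ne k j with rfl | hkj <;> simp [*, toR3_sub]
  inner_nonneg k := by
    rcases eq_or_ne k j with rfl | hkj
    · simpa [toR3_sub, inner_sub_left] using hle
    · simpa [hkj] using hG.inner_nonneg k

theorem svaStep (hG : IsAdaptedBasis Y G) (hmono : Monotone fun i => ⟪toR3 (G i), Y⟫)
    (hY : Y ≠ 0) {G' : Fin 3 → Fin 3 → ℤ} (hstep : SVAStep Y G G') :
    IsAdaptedBasis Y G' ∧ Monotone fun i => ⟪toR3 (G' i), Y⟫ := by
  obtain ⟨f, hf, σ, hσ, h01, h12⟩ := hstep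
  have hf : IsAdaptedBasis Y f := by
    rcases hf with ⟨-, rfl⟩ | ⟨-, rfl⟩ | ⟨-, rfl⟩
    · convert hG.update_sub (i := 0) (j := 1) (by decide) (hmono (by decide)) using 1
      ext k : 1; fin_cases k <;> simp
    · convert hG.update_sub (i := 1) (j := 2) (by decide) (hmono (by decide)) using 1
      ext k : 1; fin_cases k <;> simp
    · convert hG.update_sub (i := 0) (j := 2) (by decide) (hmono (by decide)) using 1
      ext k : 1; fin_cases k <;> simp
  obtain rfl : G' = f ∘ σ := funext hσ
  have hG' := hf.comp_perm σ
  refine ⟨hG', Fin.monotone_iff_le_succ.mpr fun i => ?_⟩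
  fin_cases i
  · exact inner_le_inner_of_norm_projL_le hY (hG'.inner_nonneg 0) (hG'.inner_nonneg 1) h01
  · exact inner_le_inner_of_norm_projL_le hY (hG'.inner_nonneg 1) (hG'.inner_nonneg 2) h12

theorem linearIndependent (hG : IsAdaptedBasis Y G) :
    LinearIndependent ℝ fun i => toR3 (G i) := by
  have hspan : ∀ v, toR3 v ∈ Submodule.span ℝ (range fun i => toR3 (G i)) := fun v => by
    obtain ⟨n, rfl⟩ := (Submodule.mem_span_range_iff_exists_fun ℤ).mp
      (hG.span_eq_top ▸ Submodule.mem_top (x := v))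
    rw [toR3_sum_zsmul, Submodule.mem_span_range_iff_exists_fun]
    exact ⟨_, rfl⟩
  refine linearIndependent_of_top_le_span_of_card_eq_finrank ?_ (by simp)
  rw [← (EuclideanSpace.basisFun (Fin 3) ℝ).toBasis.span_eq, Submodule.span_le]
  rintro _ ⟨j, rfl⟩
  rw [SetLike.mem_coe]
  convert hspan (Pi.single j 1) using 1
  ext i
  simp [toR3, toE3, Pi.single_apply]

theorem inner_le_abs_inner (hG : IsAdaptedBasis Y G) {h n : Fin 3 → ℤ}
    (hh : projPl Y (toR3 h) ∈ hexHull Y G) (hn : ∑ i, n i • G i = h) {k : Fin 3} (hk : n k ≠ 0) :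
    ⟪toR3 (G k), Y⟫ ≤ |⟪toR3 h, Y⟫| := by
  obtain ⟨a, ha, haY⟩ := hG.exists_pos_coord
  have hhex : hexHull Y G = convexHull ℝ (range (colP Y G) ∪ range (-colP Y G)) := by
    simp only [hexHull]
    congr 1
    ext z
    simp [Fin.exists_fin_succ, or_assoc, eq_comm]
  obtain ⟨c, hc, hcz⟩ := exists_sum_abs_le_one_of_mem_convexHull (hhex ▸ hh)
  obtain ⟨t, ht⟩ := exists_eq_sum_add_smul_of_projPl_eq hcz.symm
  have hcoord : ∀ i, (n i : ℝ) - t * a i = c i := by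
    have hcomb : ∑ i, (n i : ℝ) • toR3 (G i) = ∑ i, (c i + t * a i) • toR3 (G i) := by
      rw [← toR3_sum_zsmul, hn, ht, ← haY]
      simp only [add_smul, mul_smul, Finset.sum_add_distrib, Finset.smul_sum]
    intro i
    have := congrFun (hG.linearIndependent.fintypeLinearCombination_injective
      (by simpa only [Fintype.linearCombination_apply] using hcomb)) i
    linarith
  have hsum : ∑ i, |(n i : ℝ) - t * a i| ≤ 1 := by simpa [hcoord] using hc
  have hinner : ⟪toR3 h, Y⟫ = ∑ i, (n i : ℝ) * ⟪toR3 (G i), Y⟫ := by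
    rw [← hn, toR3_sum_zsmul, sum_inner]
    simp only [real_inner_smul_left]
  rw [hinner]
  exact le_abs_sum_mul_of_sum_abs_sub_mul_le_one ha hG.inner_nonneg hsum hk

theorem norm_projL_le (hG : IsAdaptedBasis Y G) (hmono : Monotone fun i => ⟪toR3 (G i), Y⟫)
    {h : Fin 3 → ℤ} (hh : projPl Y (toR3 h) ∈ hexHull Y G) {k : Fin 3}
    (hk : h ∉ Submodule.span ℤ (G '' Iio k)) :
    ‖projL Y (toR3 (G k))‖ ≤ ‖projL Y (toR3 h)‖ := by
  obtain ⟨n, hn⟩ := (Submodule.mem_span_range_iff_exists_fun ℤ).mp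
    (hG.span_eq_top ▸ Submodule.mem_top (x := h))
  obtain ⟨j, hkj, hj⟩ : ∃ j, k ≤ j ∧ n j ≠ 0 := by
    by_contra! hzero
    refine hk (hn ▸ Submodule.sum_mem _ fun i _ => ?_)
    rcases lt_or_ge i k with hik | hki
    · exact Submodule.smul_mem _ _ (Submodule.subset_span ⟨i, hik, rfl⟩)
    · simp [hzero i hki]
  refine norm_projL_le_of_abs_inner_le ?_
  rw [abs_of_nonneg (hG.inner_nonneg k)]
  exact (hmono hkj).trans (hG.inner_le_abs_inner hh hn hj)

end IsAdaptedBasis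

theorem IsSVARun.isAdaptedBasis {Y : E3} {g : ℕ → Fin 3 → Fin 3 → ℤ} (hg : IsSVARun Y g)
    (h0 : 0 < Y 0) (h01 : Y 0 < Y 1) (h12 : Y 1 < Y 2) (s : ℕ) :
    IsAdaptedBasis Y (g s) ∧ Monotone fun i => ⟪toR3 (g s i), Y⟫ := by
  induction s with
  | zero =>
    have hg0 : g 0 = fun i => Pi.single i 1 := by
      ext i j; simp [hg.1, Pi.single_apply, eq_comm]
    rw [hg0]
    refine ⟨IsAdaptedBasis.pi_single fun i => ?_, Fin.monotone_iff_le_succ.mpr fun i => ?_⟩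
    · fin_cases i <;> simp <;> linarith
    · fin_cases i <;> simp [inner_toR3_single] <;> linarith
  | succ s ih => exact ih.1.svaStep ih.2 (fun hY => by simp [hY] at h0) (hg.2 s)

theorem sva_prism_lemma_general (Y : E3) (h0 : 0 < Y 0) (h01 : Y 0 < Y 1) (h12 : Y 1 < Y 2)
    (g : ℕ → Fin 3 → Fin 3 → ℤ) (hg : IsSVARun Y g) (s : ℕ) :
    (∀ h : Fin 3 → ℤ, projPl Y (toR3 h) ∈ hexHull Y (g s) →
      (h ≠ 0 → ‖projL Y (toR3 (g s 0))‖ ≤ ‖projL Y (toR3 h)‖) ∧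
      ((∀ n : ℤ, h ≠ n • g s 0) → ‖projL Y (toR3 (g s 1))‖ ≤ ‖projL Y (toR3 h)‖) ∧
      ((∀ n₀ n₁ : ℤ, h ≠ n₀ • g s 0 + n₁ • g s 1) →
        ‖projL Y (toR3 (g s 2))‖ ≤ ‖projL Y (toR3 h)‖)) ∧
    ∀ h : Fin 3 → Fin 3 → ℤ, LinearIndependent ℤ (fun i : Fin 3 => h i) →
      (∀ i, projPl Y (toR3 (h i)) ∈ hexHull Y (g s)) →
      ‖projL Y (toR3 (g s 2))‖ ≤ max3 fun i => ‖projL Y (toR3 (h i))‖ := by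
  obtain ⟨hG, hmono⟩ := hg.isAdaptedBasis h0 h01 h12 s
  have hIio1 : Iio (1 : Fin 3) = {0} := by ext i; fin_cases i <;> simp
  have hIio2 : Iio (2 : Fin 3) = {0, 1} := by ext i; fin_cases i <;> simp
  refine ⟨fun h hh => ⟨fun hne => hG.norm_projL_le hmono hh (k := 0) ?_,
    fun hne => hG.norm_projL_le hmono hh (k := 1) ?_,
    fun hne => hG.norm_projL_le hmono hh (k := 2) ?_⟩, fun H hH hhex => ?_⟩
  · simpa using hne
  · rw [hIio1, image_singleton, Submodule.mem_span_singleton]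
    rintro ⟨n, rfl⟩
    exact hne n rfl
  · rw [hIio2, image_pair, Submodule.mem_span_pair]
    rintro ⟨n₀, n₁, rfl⟩
    exact hne n₀ n₁ rfl
  · obtain ⟨i, hi⟩ := hH.exists_notMem_span_finset (w := {g s 0, g s 1})
      (Finset.card_le_two.trans_lt (by simp))
    refine (hG.norm_projL_le hmono (hhex i) (k := 2) ?_).trans
      (le_max3 (fun i => ‖projL Y (toR3 (H i))‖) i)
    rwa [hIio2, image_pair, ← Finset.coe_pair]

/-- the Prism Lemma. -/
theorem sva_prism_lemma (Y : E3) (h0 : 0 < Y 0) (h01 : Y 0 < Y 1) (h12 : Y 1 < Y 2)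
    (hind : LinearIndependent ℚ fun i : Fin 3 => Y i)
    (g : ℕ → Fin 3 → Fin 3 → ℤ) (hg : IsSVARun Y g) (s : ℕ) :
    (∀ h : Fin 3 → ℤ, projPl Y (toR3 h) ∈ hexHull Y (g s) →
      (h ≠ 0 → ‖projL Y (toR3 (g s 0))‖ ≤ ‖projL Y (toR3 h)‖) ∧
      ((∀ n : ℤ, h ≠ n • g s 0) → ‖projL Y (toR3 (g s 1))‖ ≤ ‖projL Y (toR3 h)‖) ∧
      ((∀ n₀ n₁ : ℤ, h ≠ n₀ • g s 0 + n₁ • g s 1) →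
        ‖projL Y (toR3 (g s 2))‖ ≤ ‖projL Y (toR3 h)‖)) ∧
    ∀ h : Fin 3 → Fin 3 → ℤ, LinearIndependent ℤ (fun i : Fin 3 => h i) →
      (∀ i, projPl Y (toR3 (h i)) ∈ hexHull Y (g s)) →
      ‖projL Y (toR3 (g s 2))‖ ≤ max3 fun i => ‖projL Y (toR3 (h i))‖ :=
  sva_prism_lemma_general Y h0 h01 h12 g hg s

end
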